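/- arXiv:2012.13531 — 2 statements merged into one kernel-verified Lean document; each statement's English description precedes it below -/
import Mathlib

section
/- Let α > −2, let N ≥ 3 be an integer, and let (u, v) be an entire radial solution of Δ²u = |x|^α e^u normalized by u(0) = 0. Then: v(0) < 0; v is strictly increasing on (0, ∞); v(r) < 0 for every r ≥ 0; the limit ℓ := lim_{r→∞} v(r) exists in ℝ and satisfies ℓ ≤ 0; and u is strictly decreasing on (0, ∞). -/
open MeasureTheory Real Set Filter

noncomputable section

/-- An entire radial solution of `Δ²u = |x|^α e^u` in dimension `N`, normalized by
`u(0) = 0`: a pair of `C²` functions `u, v` on `[0,∞)` with `u(0) = 0`,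
`u′(0) = v′(0) = 0` (one-sided derivatives at `0`), satisfying for all `r > 0`
`u″(r) + (N-1)u′(r)/r = v(r)` and `v″(r) + (N-1)v′(r)/r = r^α e^{u(r)}`. -/
def IsEntireRadialSolution (N : ℕ) (α : ℝ) (u v : ℝ → ℝ) : Prop :=
  ContDiffOn ℝ 2 u (Set.Ici 0) ∧ ContDiffOn ℝ 2 v (Set.Ici 0) ∧
  u 0 = 0 ∧ derivWithin u (Set.Ici 0) 0 = 0 ∧ derivWithin v (Set.Ici 0) 0 = 0 ∧
  (∀ r > (0 : ℝ), deriv (deriv u) r + ((N : ℝ) - 1) * deriv u r / r = v r) ∧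
  (∀ r > (0 : ℝ), deriv (deriv v) r + ((N : ℝ) - 1) * deriv v r / r = r ^ α * Real.exp (u r))

/-- The set of initial data `β = v(0)` for which an entire radial solution exists. -/
def entireSet (N : ℕ) (α : ℝ) : Set ℝ :=
  {β : ℝ | ∃ u v : ℝ → ℝ, IsEntireRadialSolution N α u v ∧ v 0 = β}

/-!
For `Δf = f'' + (N - 1) f' / r`, the flux `r ^ (N - 1) * f'(r)` has derivative `r ^ (N - 1) * Δf`
and vanishes at `0`; hence `Δf > 0` forces `f' > 0` and `Δf < 0` forces `f' < 0`. Since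
`Δv = r ^ α * e ^ u > 0`, `v` is increasing; once `v < 0` is known, `v` has a limit and `u` is
decreasing.

The heart of the matter is `v < 0`. If `v ≥ 0` somewhere, then `v ≥ c > 0` further out, so
`u' → ∞` and `u` grows at least linearly. Integrating the two equations four times over
`[r, r + ε]` gives `u (r + ε) ≥ u r + K ε ^ 4 e ^ (u r / 2)` for large `r`. Steps `ε_k = e ^ (-k/8)`
then raise `u` by at least `1` each while having finite total length, so `u` would be unbounded
on a compact interval.
-/

lemma le_sub_of_pow_le_deriv {f f' : ℝ → ℝ} {a b L : ℝ} {k : ℕ} (hab : a ≤ b)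
    (hf : ∀ x ∈ Icc a b, HasDerivAt f (f' x) x) (h : ∀ x ∈ Ioo a b, L * (x - a) ^ k ≤ f' x) :
    L * (b - a) ^ (k + 1) / (k + 1) ≤ f b - f a := by
  set P : ℝ → ℝ := fun x => L * (x - a) ^ (k + 1) / (k + 1)
  have hP : ∀ x, HasDerivAt P (L * (x - a) ^ k) x := fun x => by
    refine (((hasDerivAt_pow (k + 1) (x - a)).comp_sub_const x a).const_mul L
      |>.div_const ((k : ℝ) + 1)).congr_deriv ?_
    push_cast
    field_simp
  have hmono : MonotoneOn (fun x => f x - P x) (Icc a b) := by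
    refine monotoneOn_of_hasDerivWithinAt_nonneg (f' := fun x => f' x - L * (x - a) ^ k)
      (convex_Icc a b)
      (fun x hx => ((hf x hx).sub (hP x)).continuousAt.continuousWithinAt) (fun x hx => ?_)
      (fun x hx => ?_)
    · rw [interior_Icc] at hx
      exact ((hf x (Ioo_subset_Icc_self hx)).sub (hP x)).hasDerivWithinAt
    · rw [interior_Icc] at hx
      exact sub_nonneg.2 (h x hx)
  have := hmono ⟨le_rfl, hab⟩ ⟨hab, le_rfl⟩ hab
  simp only [P, sub_self, zero_pow k.succ_ne_zero, mul_zero, zero_div, sub_zero] at this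
  linarith

structure HasRadialLaplacian (N : ℕ) (f g : ℝ → ℝ) : Prop where
  contDiffOn : ContDiffOn ℝ 2 f (Ici 0)
  derivWithin_zero : derivWithin f (Ici 0) 0 = 0
  ode : ∀ r > 0, deriv (deriv f) r + ((N : ℝ) - 1) * deriv f r / r = g r

def radialFlux (N : ℕ) (f : ℝ → ℝ) (r : ℝ) : ℝ := r ^ (N - 1) * derivWithin f (Ici 0) r

lemma radialFlux_of_pos (N : ℕ) (f : ℝ → ℝ) {r : ℝ} (hr : 0 < r) :
    radialFlux N f r = r ^ (N - 1) * deriv f r := by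
  rw [radialFlux, derivWithin_of_mem_nhds (Ici_mem_nhds hr)]

namespace HasRadialLaplacian

variable {N : ℕ} {f g : ℝ → ℝ}

lemma neg (hf : HasRadialLaplacian N f g) :
    HasRadialLaplacian N (fun r => -f r) (fun r => -g r) where
  contDiffOn := hf.contDiffOn.neg
  derivWithin_zero := by rw [derivWithin.fun_neg, hf.derivWithin_zero, neg_zero]
  ode r hr := by
    simp only [deriv.fun_neg']
    rw [← hf.ode r hr]
    ring

lemma hasDerivAt (hf : HasRadialLaplacian N f g) {r : ℝ} (hr : 0 < r) :
    HasDerivAt f (deriv f r) r :=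
  ((hf.contDiffOn.differentiableOn (by norm_num)).differentiableAt (Ici_mem_nhds hr)).hasDerivAt

lemma continuousOn_radialFlux (hf : HasRadialLaplacian N f g) :
    ContinuousOn (radialFlux N f) (Ici 0) :=
  (continuous_pow _).continuousOn.mul
    (hf.contDiffOn.continuousOn_derivWithin (uniqueDiffOn_Ici 0) (by norm_num))

lemma radialFlux_zero (hf : HasRadialLaplacian N f g) : radialFlux N f 0 = 0 := by
  simp [radialFlux, hf.derivWithin_zero]

lemma hasDerivAt_radialFlux (hf : HasRadialLaplacian N f g) (hN : 1 ≤ N) {r : ℝ} (hr : 0 < r) :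
    HasDerivAt (radialFlux N f) (r ^ (N - 1) * g r) r := by
  have hf' : HasDerivAt (deriv f) (deriv (deriv f) r) r :=
    (((hf.contDiffOn.mono Ioi_subset_Ici_self).deriv_of_isOpen isOpen_Ioi le_rfl).differentiableOn
      one_ne_zero |>.differentiableAt (Ioi_mem_nhds hr)).hasDerivAt
  have hflux : radialFlux N f =ᶠ[nhds r] fun s => s ^ (N - 1) * deriv f s :=
    eventually_of_mem (Ioi_mem_nhds hr) fun s hs => radialFlux_of_pos N f hs
  refine (((hasDerivAt_pow (N - 1) r).mul hf').congr_of_eventuallyEq hflux).congr_deriv ?_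
  rw [← hf.ode r hr, Nat.cast_sub hN, Nat.cast_one]
  obtain ⟨n, rfl⟩ : ∃ n, N = n + 1 := ⟨N - 1, by omega⟩
  simp only [Nat.add_sub_cancel, Nat.cast_add, Nat.cast_one, add_sub_cancel_right]
  rcases n with _ | n
  · simp
  · simp only [Nat.add_sub_cancel, pow_succ]
    field_simp
    ring

lemma deriv_pos (hf : HasRadialLaplacian N f g) (hN : 1 ≤ N) (hg : ∀ r > 0, 0 < g r) {r : ℝ}
    (hr : 0 < r) : 0 < deriv f r := by
  have hflux : StrictMonoOn (radialFlux N f) (Ici 0) :=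
    strictMonoOn_of_hasDerivWithinAt_pos (convex_Ici 0) hf.continuousOn_radialFlux
      (fun x hx => (hf.hasDerivAt_radialFlux hN (by simpa using hx)).hasDerivWithinAt)
      (fun x hx => by
        rw [interior_Ici] at hx
        exact mul_pos (pow_pos hx _) (hg x hx))
  have := hflux self_mem_Ici hr.le hr
  rw [hf.radialFlux_zero, radialFlux_of_pos N f hr] at this
  exact pos_of_mul_pos_right this (pow_nonneg hr.le _)

lemma deriv_neg (hf : HasRadialLaplacian N f g) (hN : 1 ≤ N) (hg : ∀ r > 0, g r < 0) {r : ℝ}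
    (hr : 0 < r) : deriv f r < 0 := by
  simpa using hf.neg.deriv_pos hN (fun r hr => neg_pos.2 (hg r hr)) hr

lemma le_deriv_of_le (hf : HasRadialLaplacian N f g) (hN : 1 ≤ N) {r t L : ℝ} {k : ℕ}
    (hr : 0 < r) (hrt : r ≤ t) (ht : t ≤ 2 * r) (hL : 0 ≤ L) (hfr : 0 ≤ deriv f r)
    (hg : ∀ s ∈ Ioo r t, L * (s - r) ^ k ≤ g s) :
    L * (t - r) ^ (k + 1) / (k + 1) / 2 ^ (N - 1) ≤ deriv f t := by
  have ht0 : 0 < t := hr.trans_le hrt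
  have hflux := le_sub_of_pow_le_deriv (L := r ^ (N - 1) * L) hrt
    (fun s hs => hf.hasDerivAt_radialFlux hN (hr.trans_le hs.1)) fun s hs => by
      rw [mul_assoc]
      exact mul_le_mul (pow_le_pow_left₀ hr.le hs.1.le _) (hg s hs)
        (mul_nonneg hL (pow_nonneg (sub_nonneg.2 hs.1.le) _)) (pow_nonneg (hr.trans hs.1).le _)
  rw [radialFlux_of_pos N f hr, radialFlux_of_pos N f ht0] at hflux
  set X := L * (t - r) ^ (k + 1) / (k + 1)
  have hX : 0 ≤ X := by
    have := sub_nonneg.2 hrt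
    positivity
  refine le_of_mul_le_mul_right ?_ (pow_pos ht0 (N - 1))
  calc X / 2 ^ (N - 1) * t ^ (N - 1) ≤ X / 2 ^ (N - 1) * (2 * r) ^ (N - 1) := by gcongr
    _ = r ^ (N - 1) * X := by rw [mul_pow]; field_simp
    _ ≤ deriv f t * t ^ (N - 1) := by
        have : r ^ (N - 1) * X = r ^ (N - 1) * L * (t - r) ^ (k + 1) / (k + 1) := by
          simp only [X]; ring
        nlinarith [mul_nonneg (pow_nonneg hr.le (N - 1)) hfr]

lemma eventually_one_le_deriv (hf : HasRadialLaplacian N f g) (hN : 1 ≤ N) {a c : ℝ}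
    (ha : 1 ≤ a) (hc : 0 < c) (hg : ∀ s ≥ a, c ≤ g s) : ∀ᶠ t in atTop, 1 ≤ deriv f t := by
  have hflux : ∀ t ≥ a, radialFlux N f a + c * (t - a) ≤ radialFlux N f t := fun t ht => by
    have := le_sub_of_pow_le_deriv (k := 0) (L := c) ht
      (fun s hs => hf.hasDerivAt_radialFlux hN (by linarith [hs.1])) fun s hs => by
        have hs1 : 1 ≤ s := ha.trans hs.1.le
        calc c * (s - a) ^ 0 = 1 * c := by ring
          _ ≤ s ^ (N - 1) * g s :=
            mul_le_mul (one_le_pow₀ hs1) (hg s hs.1.le) hc.le (by positivity)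
    simp only [zero_add, Nat.cast_zero, pow_one, div_one] at this
    linarith
  set t₀ := a + |radialFlux N f a| / c
  have ht₀ : a ≤ t₀ := le_add_of_nonneg_right (by positivity)
  have hnonneg : ∀ t ≥ t₀, 0 ≤ deriv f t := fun t ht => by
    have hpos : 0 < t := by linarith
    have hF : 0 ≤ radialFlux N f t := by
      have := hflux t (ht₀.trans ht)
      have : |radialFlux N f a| ≤ c * (t - a) :=
        calc |radialFlux N f a| = c * (|radialFlux N f a| / c) := by field_simp
          _ ≤ c * (t - a) := by gcongr; linarith
      linarith [neg_abs_le (radialFlux N f a)]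
    rw [radialFlux_of_pos N f hpos] at hF
    exact nonneg_of_mul_nonneg_right (by linarith) (pow_pos hpos _)
  -- once `f' ≥ 0` beyond `t₀`, comparing fluxes on `[t / 2, t]` gives `f' t ≥ c t / 2 ^ N`
  filter_upwards [eventually_ge_atTop (max (2 * t₀) (2 ^ N / c))] with t ht
  have ht₀t : 2 * t₀ ≤ t := le_of_max_le_left ht
  have hct : 2 ^ N / c ≤ t := le_of_max_le_right ht
  have := hf.le_deriv_of_le hN (r := t / 2) (t := t) (k := 0) (L := c) (by linarith) (by linarith)
    (by linarith) hc.le (hnonneg _ (by linarith)) fun s hs => by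
      simpa using hg s (by linarith [hs.1])
  calc (1 : ℝ) ≤ c * (t - t / 2) / 2 ^ (N - 1) := by
        rw [div_le_iff₀ hc] at hct
        rw [le_div_iff₀ (by positivity)]
        obtain ⟨n, rfl⟩ : ∃ n, N = n + 1 := ⟨N - 1, by omega⟩
        simp only [Nat.add_sub_cancel, pow_succ] at hct ⊢
        linarith
    _ ≤ deriv f t := by simpa using this

end HasRadialLaplacian

lemma not_tendsto_atTop_of_exp_gain {φ : ℝ → ℝ} {a K : ℝ} (hK : 0 < K)
    (hφ : ContinuousOn φ (Ici a))
    (hgain : ∀ᶠ r in atTop, ∀ ε ∈ Ioc (0 : ℝ) 1, φ r + K * ε ^ 4 * exp (φ r / 2) ≤ φ (r + ε)) :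
    ¬ Tendsto φ atTop atTop := by
  intro hφ_top
  obtain ⟨R, hR⟩ := eventually_atTop.1 hgain
  obtain ⟨r₀, hr₀, hφr₀⟩ :=
    ((eventually_ge_atTop (max a R)).and (hφ_top.eventually_ge_atTop (-2 * log K))).exists
  -- `(q ^ k) ^ 4 = e ^ (-k/2)` exactly offsets the growth `e ^ (k/2)` of `e ^ (φ / 2)`
  set q := exp (-(1 / 8 : ℝ)) with hq
  have hq0 : 0 < q := exp_pos _
  have hq1 : q < 1 := exp_lt_one_iff.2 (by norm_num)
  set r : ℕ → ℝ := fun k => r₀ + ∑ j ∈ Finset.range k, q ^ j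
  have hr : ∀ k, r k ∈ Icc r₀ (r₀ + (1 - q)⁻¹) := fun k => by
    refine ⟨le_add_of_nonneg_right (Finset.sum_nonneg fun j _ => (pow_pos hq0 j).le), ?_⟩
    have := geom_sum_Ico_le_of_lt_one (m := 0) (n := k) hq0.le hq1
    rw [← Finset.range_eq_Ico, pow_zero, one_div] at this
    exact add_le_add_right this r₀
  have hgrowth : ∀ k : ℕ, φ r₀ + k ≤ φ (r k) := by
    intro k
    induction k with
    | zero => simp [r]
    | succ k ih =>
      have hstep := hR (r k) ((le_max_right a R).trans (hr₀.trans (hr k).1)) (q ^ k)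
        ⟨pow_pos hq0 k, pow_le_one₀ hq0.le hq1.le⟩
      have hone : 1 ≤ K * (q ^ k) ^ 4 * exp (φ (r k) / 2) :=
        calc (1 : ℝ) = K * exp (-2 * log K / 2) := by
              rw [show -2 * log K / 2 = -log K by ring, exp_neg, exp_log hK, mul_inv_cancel₀ hK.ne']
          _ ≤ K * exp (φ r₀ / 2) := by gcongr
          _ = K * (q ^ k) ^ 4 * exp ((φ r₀ + k) / 2) := by
              rw [hq, ← exp_nat_mul, ← exp_nat_mul, mul_assoc, ← exp_add]
              ring_nf
          _ ≤ K * (q ^ k) ^ 4 * exp (φ (r k) / 2) := by gcongr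
      have hr_succ : r (k + 1) = r k + q ^ k := by
        simp only [r, Finset.sum_range_succ]
        ring
      rw [hr_succ]
      push_cast
      linarith
  obtain ⟨M, hM⟩ := isCompact_Icc.bddAbove_image
    (hφ.mono fun x hx => (le_max_left a R).trans (hr₀.trans hx.1))
  obtain ⟨k, hk⟩ := exists_nat_gt (M - φ r₀)
  linarith [hM ⟨r k, hr k, rfl⟩, hgrowth k]

lemma eventually_sq_le_exp_half {φ : ℝ → ℝ} {R A : ℝ} (hφ : ∀ t ≥ R, t + A ≤ φ t) :
    ∀ᶠ t in atTop, t ^ 2 ≤ exp (φ t / 2) := by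
  have hlim := ((tendsto_exp_div_pow_atTop 2).comp
    (tendsto_id.atTop_div_const two_pos)).eventually_ge_atTop (4 / exp (A / 2))
  filter_upwards [hlim, eventually_ge_atTop R, eventually_gt_atTop 0] with t ht htR ht0
  rw [Function.comp_apply, id, div_le_div_iff₀ (exp_pos _) (by positivity)] at ht
  calc t ^ 2 = 4 * (t / 2) ^ 2 := by ring
    _ ≤ exp (t / 2) * exp (A / 2) := by linarith
    _ = exp ((t + A) / 2) := by rw [← exp_add]; ring_nf
    _ ≤ exp (φ t / 2) := exp_le_exp.2 (by linarith [hφ t htR])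

lemma MonotoneOn.exists_tendsto_atTop_of_le {f : ℝ → ℝ} {a b : ℝ} (hf : MonotoneOn f (Ici a))
    (hb : ∀ x ≥ a, f x ≤ b) : ∃ l ≤ b, Tendsto f atTop (nhds l) := by
  have hmono : Monotone fun x => f (max x a) := fun x y hxy =>
    hf (le_max_right x a) (le_max_right y a) (max_le_max_right a hxy)
  refine ⟨_, ciSup_le fun x => hb _ (le_max_right x a),
    (tendsto_atTop_ciSup hmono ⟨b, forall_mem_range.2 fun x => hb _ (le_max_right x a)⟩).congr' ?_⟩
  filter_upwards [eventually_ge_atTop a] with x hx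
  rw [max_eq_left hx]

lemma exp_div_sq_le_rpow_mul_exp {α r s x y : ℝ} (hα : -2 ≤ α) (hr : 1 ≤ r)
    (hs : s ∈ Icc r (2 * r)) (hxy : x ≤ y) : exp x / (2 * r) ^ 2 ≤ s ^ α * exp y := by
  have hs0 : 0 < s := by linarith [hs.1]
  have hpow : ((2 * r) ^ 2)⁻¹ ≤ s ^ α :=
    calc ((2 * r) ^ 2)⁻¹ ≤ (s ^ 2)⁻¹ := by gcongr; exact hs.2
      _ = s ^ (-2 : ℝ) := by rw [rpow_neg hs0.le, rpow_two]
      _ ≤ s ^ α := rpow_le_rpow_of_exponent_le (hr.trans hs.1) hα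
  rw [div_eq_inv_mul]
  exact mul_le_mul hpow (exp_le_exp.2 hxy) (exp_pos _).le (by positivity)

namespace IsEntireRadialSolution

variable {N : ℕ} {α : ℝ} {u v : ℝ → ℝ}

lemma hasRadialLaplacian_u (h : IsEntireRadialSolution N α u v) : HasRadialLaplacian N u v :=
  ⟨h.1, h.2.2.2.1, h.2.2.2.2.2.1⟩

lemma hasRadialLaplacian_v (h : IsEntireRadialSolution N α u v) :
    HasRadialLaplacian N v fun r => r ^ α * exp (u r) :=
  ⟨h.2.1, h.2.2.2.2.1, h.2.2.2.2.2.2⟩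

lemma deriv_v_pos (h : IsEntireRadialSolution N α u v) (hN : 1 ≤ N) {r : ℝ} (hr : 0 < r) :
    0 < deriv v r :=
  h.hasRadialLaplacian_v.deriv_pos hN (fun _ hs => mul_pos (rpow_pos_of_pos hs α) (exp_pos _)) hr

lemma strictMonoOn_v (h : IsEntireRadialSolution N α u v) (hN : 1 ≤ N) :
    StrictMonoOn v (Ici 0) :=
  strictMonoOn_of_deriv_pos (convex_Ici 0) h.hasRadialLaplacian_v.contDiffOn.continuousOn
    fun r hr => h.deriv_v_pos hN (by simpa using hr)

lemma add_le_u_add (h : IsEntireRadialSolution N α u v) (hN : 1 ≤ N) (hα : -2 ≤ α) {r ε : ℝ}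
    (hr : 1 ≤ r) (hε : ε ∈ Icc 0 r) (hu : ∀ s ∈ Icc r (2 * r), 0 ≤ deriv u s) (hv : 0 ≤ v r) :
    u r + ε ^ 4 * exp (u r) / (96 * 4 ^ (N - 1) * r ^ 2) ≤ u (r + ε) := by
  have hr0 : 0 < r := by linarith
  have hU := h.hasRadialLaplacian_u
  have hV := h.hasRadialLaplacian_v
  have hu_mono : MonotoneOn u (Icc r (2 * r)) :=
    monotoneOn_of_hasDerivWithinAt_nonneg (convex_Icc _ _)
      (hU.contDiffOn.continuousOn.mono fun s hs => hr0.le.trans hs.1)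
      (fun s hs => (hU.hasDerivAt (hr0.trans_le (interior_subset hs).1)).hasDerivWithinAt)
      fun s hs => hu s (interior_subset hs)
  set L₀ := exp (u r) / (2 * r) ^ 2
  have hΔv : ∀ s ∈ Icc r (2 * r), L₀ * (s - r) ^ 0 ≤ s ^ α * exp (u s) := fun s hs => by
    rw [pow_zero, mul_one]
    exact exp_div_sq_le_rpow_mul_exp hα hr hs (hu_mono ⟨le_rfl, by linarith⟩ hs hs.1)
  have hv' : ∀ t ∈ Icc r (2 * r), L₀ / 2 ^ (N - 1) * (t - r) ^ 1 ≤ deriv v t := fun t ht =>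
    (le_of_eq (by push_cast; ring)).trans <| hV.le_deriv_of_le hN hr0 ht.1 ht.2 (by positivity)
      (h.deriv_v_pos hN hr0).le fun s hs => hΔv s ⟨hs.1.le, hs.2.le.trans ht.2⟩
  have hv_ge : ∀ t ∈ Icc r (2 * r), L₀ / 2 ^ (N - 1) / 2 * (t - r) ^ 2 ≤ v t := fun t ht => by
    have := le_sub_of_pow_le_deriv ht.1 (fun s hs => hV.hasDerivAt (hr0.trans_le hs.1))
      fun s hs => hv' s ⟨hs.1.le, hs.2.le.trans ht.2⟩
    push_cast at this
    linarith
  have hu' : ∀ t ∈ Icc r (2 * r), L₀ / 2 ^ (N - 1) / 2 / 3 / 2 ^ (N - 1) * (t - r) ^ 3 ≤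
      deriv u t := fun t ht =>
    (le_of_eq (by push_cast; ring)).trans <| hU.le_deriv_of_le hN hr0 ht.1 ht.2 (by positivity)
      (hu r ⟨le_rfl, by linarith⟩) fun s hs => hv_ge s ⟨hs.1.le, hs.2.le.trans ht.2⟩
  have hu_ge := le_sub_of_pow_le_deriv (by linarith [hε.1] : r ≤ r + ε)
    (fun s hs => hU.hasDerivAt (hr0.trans_le hs.1))
    fun s hs => hu' s ⟨hs.1.le, hs.2.le.trans (by linarith [hε.2])⟩
  have hconst : ε ^ 4 * exp (u r) / (96 * 4 ^ (N - 1) * r ^ 2) =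
      L₀ / 2 ^ (N - 1) / 2 / 3 / 2 ^ (N - 1) * (r + ε - r) ^ (3 + 1) / ((3 : ℕ) + 1) := by
    rw [show (4 : ℝ) ^ (N - 1) = 2 ^ (N - 1) * 2 ^ (N - 1) by rw [← mul_pow]; norm_num]
    simp only [L₀]
    push_cast
    field_simp
    ring
  linarith

lemma add_exp_half_le_u_add (h : IsEntireRadialSolution N α u v) (hN : 1 ≤ N) (hα : -2 ≤ α)
    {r ε : ℝ} (hr : 1 ≤ r) (hr_sq : r ^ 2 ≤ exp (u r / 2)) (hε : ε ∈ Ioc 0 1)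
    (hu : ∀ s ∈ Icc r (2 * r), 0 ≤ deriv u s) (hv : 0 ≤ v r) :
    u r + (96 * 4 ^ (N - 1))⁻¹ * ε ^ 4 * exp (u r / 2) ≤ u (r + ε) := by
  refine le_trans ?_ (h.add_le_u_add hN hα hr ⟨hε.1.le, hε.2.trans hr⟩ hu hv)
  gcongr
  rw [le_div_iff₀ (by positivity)]
  calc (96 * 4 ^ (N - 1))⁻¹ * ε ^ 4 * exp (u r / 2) * (96 * 4 ^ (N - 1) * r ^ 2)
      = ε ^ 4 * exp (u r / 2) * r ^ 2 := by field_simp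
    _ ≤ ε ^ 4 * exp (u r / 2) * exp (u r / 2) := by gcongr
    _ = ε ^ 4 * exp (u r) := by rw [mul_assoc, ← exp_add, add_halves]

lemma v_neg (h : IsEntireRadialSolution N α u v) (hN : 1 ≤ N) (hα : -2 ≤ α) {r : ℝ}
    (hr : 0 ≤ r) : v r < 0 := by
  by_contra! hvr
  have hU := h.hasRadialLaplacian_u
  have hv_mono := h.strictMonoOn_v hN
  have hr1 : r + 1 ∈ Ici (0 : ℝ) := by simp only [mem_Ici]; linarith
  have hc : 0 < v (r + 1) := hvr.trans_lt (hv_mono hr hr1 (by linarith))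
  have hv_ge : ∀ s ≥ r + 1, v (r + 1) ≤ v s := fun s hs =>
    hv_mono.monotoneOn hr1 (mem_Ici.2 (hr1.out.trans hs)) hs
  obtain ⟨R, hR⟩ := eventually_atTop.1
    ((hU.eventually_one_le_deriv hN (by linarith) hc hv_ge).and (eventually_ge_atTop (r + 1)))
  have hR1 : 1 ≤ R := by linarith [(hR R le_rfl).2]
  have hlin : ∀ t ≥ R, t + (u R - R) ≤ u t := fun t ht => by
    have := le_sub_of_pow_le_deriv (k := 0) (L := 1) ht
      (fun s hs => hU.hasDerivAt (by linarith [hs.1])) fun s hs => by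
        simpa using (hR s hs.1.le).1
    simp only [zero_add, Nat.cast_zero, pow_one, one_mul, div_one] at this
    linarith
  have hu_top : Tendsto u atTop atTop := tendsto_atTop_atTop.2 fun b =>
    ⟨max R (b - u R + R), fun t ht => by
      linarith [hlin t (le_of_max_le_left ht), le_of_max_le_right ht]⟩
  refine not_tendsto_atTop_of_exp_gain (a := 0) (K := (96 * 4 ^ (N - 1))⁻¹) (by positivity)
    hU.contDiffOn.continuousOn ?_ hu_top
  filter_upwards [eventually_sq_le_exp_half hlin, eventually_ge_atTop R] with t ht_sq ht ε hε
  exact h.add_exp_half_le_u_add hN hα (hR1.trans ht) ht_sq hε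
    (fun s hs => zero_le_one.trans (hR s (ht.trans hs.1)).1) (hc.le.trans (hv_ge t (hR t ht).2))

end IsEntireRadialSolution

/-- Basic qualitative properties of entire radial solutions for `N ≥ 3`, `α > -2`:
`v(0) < 0`, `v` is strictly increasing on `(0, ∞)`, `v < 0` everywhere on `[0, ∞)`,
`v` has a finite limit `ℓ ≤ 0` at infinity, and `u` is strictly decreasing on
`(0, ∞)`. -/
theorem qualitative_properties_entire_radial
    (N : ℕ) (hN : 3 ≤ N) (α : ℝ) (hα : -2 < α)
    (u v : ℝ → ℝ) (h : IsEntireRadialSolution N α u v) :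
    v 0 < 0 ∧ StrictMonoOn v (Set.Ioi 0) ∧ (∀ r : ℝ, 0 ≤ r → v r < 0) ∧
      (∃ ℓ : ℝ, ℓ ≤ 0 ∧ Filter.Tendsto v Filter.atTop (nhds ℓ)) ∧
      StrictAntiOn u (Set.Ioi 0) := by
  have hN1 : 1 ≤ N := by omega
  have hv_mono := h.strictMonoOn_v hN1
  have hv_neg : ∀ r : ℝ, 0 ≤ r → v r < 0 := fun r hr => h.v_neg hN1 hα.le hr
  have hu_anti : StrictAntiOn u (Ici 0) :=
    strictAntiOn_of_deriv_neg (convex_Ici 0) h.hasRadialLaplacian_u.contDiffOn.continuousOn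
      fun r hr => h.hasRadialLaplacian_u.deriv_neg hN1 (fun s hs => hv_neg s hs.le)
        (by simpa using hr)
  obtain ⟨ℓ, hℓ, hlim⟩ :=
    hv_mono.monotoneOn.exists_tendsto_atTop_of_le fun r hr => (hv_neg r hr).le
  exact ⟨hv_neg 0 le_rfl, hv_mono.mono Ioi_subset_Ici_self, hv_neg, ⟨ℓ, hℓ, hlim⟩,
    hu_anti.mono Ioi_subset_Ici_self⟩
end
end

section
/- Let α > −2 and let N ≥ 3 be an integer. There exists a constant C > 0, depending only on N and α, such that every entire radial solution (u, v) of Δ²u = |x|^α e^u normalized by u(0) = 0 satisfies u(r) ≤ −(4+α) ln r + C for all r > 0. -/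
open MeasureTheory Real Set Filter

noncomputable section

/-!
With `k = N - 1`, the fluxes `m = r^k u'` and `w = r^k v'` satisfy `m' = r^k v` and
`w' = r^{k+α} e^u ≥ 0`; since they vanish at `0`, `w ≥ 0` and `v` is nondecreasing.

If `v > 0` somewhere, then `m`, hence `u`, increases on some `[T, ∞)`, and integrating the four
first-order equations successively over the quarters of `[R, R(1+η)]` gives
`u(R(1+η)) ≥ u(R) + c η⁴ R^{4+α} e^{u(R)}`. With `η = e^{-(u(R)-u(T))/8}` each step raises `u` by
at least `c e^{u(T)}` while the steps shrink geometrically, so the radii `R_{n+1} = R_n(1+η_n)`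
stay bounded while `u(R_n) → ∞`, contradicting monotonicity.

Hence `v ≤ 0`, so `m ≤ 0` and `u` is nonincreasing, and the same integration over `[t, 4t]` gives
`u(4t) ≤ u(2t) - c t^{4+α} e^{u(2t)}`, which rearranges into the logarithmic bound.
-/

open Topology

theorem mul_sub_le_sub_of_hasDerivAt {f f' : ℝ → ℝ} {a b K : ℝ} (hab : a ≤ b)
    (hf : ∀ x ∈ Icc a b, HasDerivAt f (f' x) x) (hK : ∀ x ∈ Icc a b, K ≤ f' x) :
    K * (b - a) ≤ f b - f a := by
  have hcont : ContinuousOn f (Icc a b) := fun x hx => (hf x hx).continuousAt.continuousWithinAt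
  have hdiff : DifferentiableOn ℝ f (interior (Icc a b)) := fun x hx =>
    (hf x (interior_subset hx)).differentiableAt.differentiableWithinAt
  refine (convex_Icc a b).mul_sub_le_image_sub_of_le_deriv hcont hdiff (fun x hx => ?_)
    a (left_mem_Icc.2 hab) b (right_mem_Icc.2 hab) hab
  rw [(hf x (interior_subset hx)).deriv]
  exact hK x (interior_subset hx)

theorem monotoneOn_of_hasDerivAt_nonneg {D : Set ℝ} [hD : D.OrdConnected] {f f' : ℝ → ℝ}
    (hf : ∀ x ∈ D, HasDerivAt f (f' x) x) (hf' : ∀ x ∈ D, 0 ≤ f' x) : MonotoneOn f D := by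
  intro a ha b hb hab
  have := mul_sub_le_sub_of_hasDerivAt hab (fun x hx => hf x (hD.out ha hb hx))
    (fun x hx => hf' x (hD.out ha hb hx))
  linarith

theorem antitoneOn_of_hasDerivAt_nonpos {D : Set ℝ} [D.OrdConnected] {f f' : ℝ → ℝ}
    (hf : ∀ x ∈ D, HasDerivAt f (f' x) x) (hf' : ∀ x ∈ D, f' x ≤ 0) : AntitoneOn f D := by
  have := monotoneOn_of_hasDerivAt_nonneg (fun x hx => (hf x hx).neg)
    (fun x hx => neg_nonneg.2 (hf' x hx))
  exact fun a ha b hb hab => neg_le_neg_iff.1 (this ha hb hab)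

theorem ContDiffOn.hasDerivAt_deriv {f : ℝ → ℝ} {s : Set ℝ} (hf : ContDiffOn ℝ 2 f s)
    (hs : IsOpen s) {x : ℝ} (hx : x ∈ s) : HasDerivAt (deriv f) (deriv (deriv f) x) x :=
  (((hf.deriv_of_isOpen hs (m := 1) (by norm_num)).differentiableOn one_ne_zero).differentiableAt
    (hs.mem_nhds hx)).hasDerivAt

theorem ContDiffOn.tendsto_deriv_nhdsGT {f : ℝ → ℝ} {a : ℝ} (hf : ContDiffOn ℝ 1 f (Ici a)) :
    Tendsto (deriv f) (𝓝[>] a) (𝓝 (derivWithin f (Ici a) a)) := by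
  have hc := hf.continuousOn_derivWithin (uniqueDiffOn_Ici a) le_rfl a self_mem_Ici
  refine (hc.tendsto.mono_left (nhdsWithin_mono a Ioi_subset_Ici_self)).congr' ?_
  filter_upwards [self_mem_nhdsWithin] with x hx using derivWithin_of_mem_nhds (Ici_mem_nhds hx)

theorem hasDerivAt_pow_mul_of_radial {k : ℕ} {φ : ℝ → ℝ} {φ' g x : ℝ} (hφ : HasDerivAt φ φ' x)
    (hx : x ≠ 0) (h : φ' + k * φ x / x = g) : HasDerivAt (fun y => y ^ k * φ y) (x ^ k * g) x := by
  refine ((hasDerivAt_pow k x).mul hφ).congr_deriv ?_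
  rw [← h]
  rcases k with _ | k
  · simp
  · field_simp
    push_cast
    ring

theorem nonneg_of_hasDerivAt_pow_mul {k : ℕ} {φ g : ℝ → ℝ}
    (hφ : ∀ x > 0, HasDerivAt (fun y => y ^ k * φ y) (x ^ k * g x) x) (hg : ∀ x > 0, 0 ≤ g x)
    (h0 : Tendsto φ (𝓝[>] 0) (𝓝 0)) {x : ℝ} (hx : 0 < x) : 0 ≤ φ x := by
  have hmono : MonotoneOn (fun y => y ^ k * φ y) (Ioi 0) :=
    monotoneOn_of_hasDerivAt_nonneg hφ fun y hy => mul_nonneg (pow_nonneg (le_of_lt hy) k) (hg y hy)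
  have hlim : Tendsto (fun y => y ^ k * φ y) (𝓝[>] 0) (𝓝 0) := by
    simpa using (((continuous_pow k).tendsto 0).mono_left nhdsWithin_le_nhds).mul h0
  have : 0 ≤ x ^ k * φ x := le_of_tendsto hlim <| by
    filter_upwards [Ioo_mem_nhdsGT hx] with y hy using hmono hy.1 hx hy.2.le
  exact nonneg_of_mul_nonneg_right this (pow_pos hx k)

/-- The flux `x ^ k * φ x` gains at least `K * (b - a)` on `[a, b]` and keeps it on `[b, c]`,
where therefore `φ ≥ K * (b - a) / P`. -/
theorem le_sub_of_hasDerivAt_pow_mul {k : ℕ} {f φ Φ : ℝ → ℝ} {a b c K P : ℝ} (ha : 0 < a)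
    (hab : a ≤ b) (hbc : b ≤ c) (hP : c ^ k ≤ P) (hf : ∀ x ∈ Icc b c, HasDerivAt f (φ x) x)
    (hΦ : ∀ x ∈ Icc a c, HasDerivAt (fun y => y ^ k * φ y) (Φ x) x)
    (hΦK : ∀ x ∈ Icc a b, K ≤ Φ x) (hΦ0 : ∀ x ∈ Icc b c, 0 ≤ Φ x) (hK : 0 ≤ K) (hφa : 0 ≤ φ a) :
    K * (b - a) / P * (c - b) ≤ f c - f b := by
  have hb : 0 < b := ha.trans_le hab
  have hKba : 0 ≤ K * (b - a) := mul_nonneg hK (sub_nonneg.2 hab)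
  have hΦb : K * (b - a) ≤ b ^ k * φ b := by
    have := mul_sub_le_sub_of_hasDerivAt hab (fun x hx => hΦ x ⟨hx.1, hx.2.trans hbc⟩) hΦK
    have : 0 ≤ a ^ k * φ a := by positivity
    linarith
  have hmono : MonotoneOn (fun y => y ^ k * φ y) (Icc b c) :=
    monotoneOn_of_hasDerivAt_nonneg (fun x hx => hΦ x ⟨hab.trans hx.1, hx.2⟩) hΦ0
  refine mul_sub_le_sub_of_hasDerivAt hbc hf fun x hx => ?_
  have hx0 : 0 < x := hb.trans_le hx.1
  have hΦx : K * (b - a) ≤ x ^ k * φ x := hΦb.trans (hmono (left_mem_Icc.2 hbc) hx hx.1)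
  have hφx : 0 ≤ φ x := nonneg_of_mul_nonneg_right (hKba.trans hΦx) (pow_pos hx0 k)
  rw [div_le_iff₀ ((pow_pos (hb.trans_le hbc) k).trans_le hP)]
  calc K * (b - a) ≤ x ^ k * φ x := hΦx
    _ ≤ P * φ x := mul_le_mul_of_nonneg_right ((pow_le_pow_left₀ hx0.le hx.2 k).trans hP) hφx
    _ = φ x * P := mul_comm _ _

theorem pow_mul_rpow_le_pow_mul_rpow {k : ℕ} {α x y : ℝ} (hkα : 0 ≤ k + α) (hx : 0 < x)
    (hxy : x ≤ y) : x ^ k * x ^ α ≤ y ^ k * y ^ α := by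
  rw [← rpow_natCast, ← rpow_add hx, ← rpow_natCast, ← rpow_add (hx.trans_le hxy)]
  exact rpow_le_rpow hx.le hxy hkα

theorem le_mul_exp_of_le_mul_one_add {ρ η : ℕ → ℝ} {q : ℝ} (hq0 : 0 ≤ q) (hq1 : q < 1)
    (hρ0 : ∀ n, 0 ≤ ρ n) (hη : ∀ n, η n ≤ q ^ n) (hρ : ∀ n, ρ (n + 1) ≤ ρ n * (1 + η n))
    (n : ℕ) : ρ n ≤ ρ 0 * exp (1 / (1 - q)) := by
  have hq : 0 < 1 - q := sub_pos.2 hq1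
  have hinv : ∀ m : ℕ, ρ m * exp (q ^ m / (1 - q)) ≤ ρ 0 * exp (1 / (1 - q)) := by
    intro m
    induction m with
    | zero => simp
    | succ m ih =>
      calc ρ (m + 1) * exp (q ^ (m + 1) / (1 - q))
          ≤ ρ m * exp (q ^ m) * exp (q ^ (m + 1) / (1 - q)) := by
            gcongr
            refine (hρ m).trans (mul_le_mul_of_nonneg_left ?_ (hρ0 m))
            linarith [add_one_le_exp (η m), exp_le_exp.2 (hη m)]
        _ = ρ m * exp (q ^ m / (1 - q)) := by
            rw [mul_assoc, ← exp_add]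
            congr 2
            field_simp
            ring
        _ ≤ ρ 0 * exp (1 / (1 - q)) := ih
  exact (le_mul_of_one_le_right (hρ0 n) (one_le_exp (by positivity))).trans (hinv n)

theorem not_monotoneOn_Ici_of_forall_add_mul_exp_le {φ : ℝ → ℝ} {T c : ℝ} (hT : 0 < T)
    (hc : 0 < c)
    (hstep : ∀ R ≥ T, ∀ η, 0 < η → η ≤ 1 → φ R + c * η ^ 4 * exp (φ R) ≤ φ (R * (1 + η))) :
    ¬ MonotoneOn φ (Ici T) := by
  intro hmono
  set g := c * exp (φ T) with hg
  have hg0 : 0 < g := by positivity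
  let η : ℝ → ℝ := fun R => exp (-(φ R - φ T) / 8)
  let ρ : ℕ → ℝ := fun n => Nat.rec T (fun _ R => R * (1 + η R)) n
  have hρ_succ : ∀ n, ρ (n + 1) = ρ n * (1 + η (ρ n)) := fun _ => rfl
  have hgrow : ∀ n : ℕ, T ≤ ρ n ∧ φ T + n * g ≤ φ (ρ n) := by
    intro n
    induction n with
    | zero => exact ⟨le_rfl, by simp [ρ]⟩
    | succ n ih =>
      obtain ⟨hTρ, hφρ⟩ := ih
      have hη1 : η (ρ n) ≤ 1 :=
        exp_le_one_iff.2 (by linarith [mul_nonneg (Nat.cast_nonneg n) hg0.le])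
      have hgain : g ≤ c * η (ρ n) ^ 4 * exp (φ (ρ n)) := by
        rw [hg, mul_assoc, ← exp_nat_mul, ← exp_add]
        gcongr
        push_cast
        linarith [mul_nonneg (Nat.cast_nonneg n) hg0.le]
      have hstep' := hstep (ρ n) hTρ (η (ρ n)) (exp_pos _) hη1
      rw [hρ_succ]
      refine ⟨hTρ.trans (le_mul_of_one_le_right (hT.le.trans hTρ) ?_), ?_⟩
      · linarith [exp_pos (-(φ (ρ n) - φ T) / 8)]
      · push_cast
        linarith
  set Rmax := T * exp (1 / (1 - exp (-(g / 8))))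
  have hρ_le : ∀ n, ρ n ≤ Rmax :=
    le_mul_exp_of_le_mul_one_add (η := fun n => η (ρ n)) (exp_pos _).le
      (exp_lt_one_iff.2 (by linarith)) (fun n => hT.le.trans (hgrow n).1)
      (fun n => by
        rw [← exp_nat_mul]
        exact exp_le_exp.2 (by linarith [(hgrow n).2]))
      (fun n => (hρ_succ n).le)
  obtain ⟨n, hn⟩ := exists_nat_gt ((φ Rmax - φ T) / g)
  rw [div_lt_iff₀ hg0] at hn
  linarith [(hgrow n).2.trans (hmono (hgrow n).1 ((hgrow n).1.trans (hρ_le n)) (hρ_le n))]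

/-- The radial system on `(0, ∞)` in flux form, `k` standing for `N - 1`. -/
structure RadialSystem (k : ℕ) (α : ℝ) (u v : ℝ → ℝ) : Prop where
  hasDerivAt_u : ∀ x > 0, HasDerivAt u (deriv u x) x
  hasDerivAt_v : ∀ x > 0, HasDerivAt v (deriv v x) x
  hasDerivAt_flux_u : ∀ x > 0, HasDerivAt (fun y => y ^ k * deriv u y) (x ^ k * v x) x
  hasDerivAt_flux_v :
    ∀ x > 0, HasDerivAt (fun y => y ^ k * deriv v y) (x ^ k * (x ^ α * exp (u x))) x
  tendsto_deriv_u : Tendsto (deriv u) (𝓝[>] 0) (𝓝 0)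
  tendsto_deriv_v : Tendsto (deriv v) (𝓝[>] 0) (𝓝 0)

theorem IsEntireRadialSolution.radialSystem {N : ℕ} {α : ℝ} {u v : ℝ → ℝ}
    (h : IsEntireRadialSolution N α u v) (hN : 1 ≤ N) : RadialSystem (N - 1) α u v := by
  obtain ⟨hu, hv, -, hu0, hv0, hode_u, hode_v⟩ := h
  have hk : ((N - 1 : ℕ) : ℝ) = (N : ℝ) - 1 := Nat.cast_pred hN
  have hderiv {f : ℝ → ℝ} (hf : ContDiffOn ℝ 2 f (Ici 0)) {x : ℝ} (hx : 0 < x) :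
      HasDerivAt f (deriv f x) x :=
    ((hf.differentiableOn (by norm_num)).differentiableAt (Ici_mem_nhds hx)).hasDerivAt
  have hderiv2 {f : ℝ → ℝ} (hf : ContDiffOn ℝ 2 f (Ici 0)) {x : ℝ} (hx : 0 < x) :
      HasDerivAt (deriv f) (deriv (deriv f) x) x :=
    (hf.mono Ioi_subset_Ici_self).hasDerivAt_deriv isOpen_Ioi hx
  refine ⟨fun x hx => hderiv hu hx, fun x hx => hderiv hv hx, fun x hx => ?_, fun x hx => ?_, ?_,
    ?_⟩
  · exact hasDerivAt_pow_mul_of_radial (hderiv2 hu hx) hx.ne' (by rw [hk]; exact hode_u x hx)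
  · exact hasDerivAt_pow_mul_of_radial (hderiv2 hv hx) hx.ne' (by rw [hk]; exact hode_v x hx)
  · simpa [hu0] using (hu.of_le (by norm_num)).tendsto_deriv_nhdsGT
  · simpa [hv0] using (hv.of_le (by norm_num)).tendsto_deriv_nhdsGT

namespace RadialSystem

variable {k : ℕ} {α : ℝ} {u v : ℝ → ℝ}

theorem deriv_v_nonneg (hs : RadialSystem k α u v) {x : ℝ} (hx : 0 < x) : 0 ≤ deriv v x :=
  nonneg_of_hasDerivAt_pow_mul hs.hasDerivAt_flux_v (fun y hy => by positivity)
    hs.tendsto_deriv_v hx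

theorem monotoneOn_v (hs : RadialSystem k α u v) : MonotoneOn v (Ioi 0) :=
  monotoneOn_of_hasDerivAt_nonneg hs.hasDerivAt_v fun _ hx => hs.deriv_v_nonneg hx

theorem hasDerivAt_neg_flux_u (hs : RadialSystem k α u v) {x : ℝ} (hx : 0 < x) :
    HasDerivAt (fun y => y ^ k * -deriv u y) (x ^ k * -v x) x := by
  simpa only [mul_neg, Pi.neg_def] using (hs.hasDerivAt_flux_u x hx).neg

theorem deriv_u_nonpos (hs : RadialSystem k α u v) (hv : ∀ x > 0, v x ≤ 0) {x : ℝ} (hx : 0 < x) :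
    deriv u x ≤ 0 :=
  neg_nonneg.1 <| nonneg_of_hasDerivAt_pow_mul (fun _ hy => hs.hasDerivAt_neg_flux_u hy)
    (fun y hy => neg_nonneg.2 (hv y hy)) (by simpa using hs.tendsto_deriv_u.neg) hx

theorem v_two_mul_le (hs : RadialSystem k α u v) (hkα : 0 ≤ k + α) (hv : ∀ x > 0, v x ≤ 0)
    {t : ℝ} (ht : 0 < t) :
    v (2 * t) ≤ -(t ^ k * t ^ α * exp (u (2 * t)) * t / (4 * t) ^ k * (2 * t)) := by
  have hpos : ∀ x ≥ t, 0 < x := fun x hx => ht.trans_le hx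
  have hu : AntitoneOn u (Ioi 0) :=
    antitoneOn_of_hasDerivAt_nonpos hs.hasDerivAt_u fun _ hx => hs.deriv_u_nonpos hv hx
  have hw' : ∀ x ∈ Icc t (2 * t),
      t ^ k * t ^ α * exp (u (2 * t)) ≤ x ^ k * (x ^ α * exp (u x)) := fun x hx => by
    have := hpos x hx.1
    rw [← mul_assoc]
    exact mul_le_mul (pow_mul_rpow_le_pow_mul_rpow hkα ht hx.1)
      (exp_le_exp.2 (hu this (hpos _ (by linarith)) hx.2)) (exp_pos _).le (by positivity)
  have hvA := le_sub_of_hasDerivAt_pow_mul (b := 2 * t) (c := 4 * t) ht (by linarith)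
    (by linarith) le_rfl (fun x hx => hs.hasDerivAt_v x (hpos x (by linarith [hx.1])))
    (fun x hx => hs.hasDerivAt_flux_v x (hpos x hx.1)) hw'
    (fun x hx => by have := hpos x (by linarith [hx.1]); positivity) (by positivity)
    (hs.deriv_v_nonneg ht)
  rw [show 2 * t - t = t by ring, show 4 * t - 2 * t = 2 * t by ring] at hvA
  linarith [hv (4 * t) (by positivity)]

theorem u_four_mul_le (hs : RadialSystem k α u v) (hkα : 0 ≤ k + α) (hv : ∀ x > 0, v x ≤ 0)
    {t : ℝ} (ht : 0 < t) :
    u (4 * t) ≤ u (2 * t) - 4 / 16 ^ k * (t ^ 4 * t ^ α) * exp (u (2 * t)) := by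
  have hpos : ∀ x ≥ t, 0 < x := fun x hx => ht.trans_le hx
  set A := t ^ k * t ^ α * exp (u (2 * t)) * t / (4 * t) ^ k * (2 * t) with hA
  have hA0 : 0 ≤ A := by positivity
  have hm' : ∀ x ∈ Icc t (2 * t), t ^ k * A ≤ x ^ k * -v x := fun x hx => by
    have hvx := hs.monotoneOn_v (hpos x hx.1) (hpos _ (by linarith)) hx.2
    exact mul_le_mul (pow_le_pow_left₀ ht.le hx.1 k) (by linarith [hs.v_two_mul_le hkα hv ht])
      hA0 (pow_nonneg (hpos x hx.1).le k)
  have huB := le_sub_of_hasDerivAt_pow_mul (b := 2 * t) (c := 4 * t) (f := fun x => -u x) ht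
    (by linarith) (by linarith) le_rfl
    (fun x hx => (hs.hasDerivAt_u x (hpos x (by linarith [hx.1]))).neg)
    (fun x hx => hs.hasDerivAt_neg_flux_u (hpos x hx.1)) hm'
    (fun x hx => mul_nonneg (pow_nonneg (hpos x (by linarith [hx.1])).le k)
      (neg_nonneg.2 (hv x (hpos x (by linarith [hx.1]))))) (by positivity)
    (neg_nonneg.2 (hs.deriv_u_nonpos hv ht))
  rw [show 2 * t - t = t by ring, show 4 * t - 2 * t = 2 * t by ring] at huB
  have hgain : t ^ k * A * t / (4 * t) ^ k * (2 * t) =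
      4 / 16 ^ k * (t ^ 4 * t ^ α) * exp (u (2 * t)) := by
    rw [hA, mul_pow, show (16 : ℝ) ^ k = 4 ^ k * 4 ^ k by rw [← mul_pow]; norm_num]
    field_simp
    ring
  linarith

theorem le_neg_log_add (hs : RadialSystem k α u v) (hkα : 0 ≤ k + α) (hv : ∀ x > 0, v x ≤ 0)
    {r : ℝ} (hr : 0 < r) :
    u r ≤ -(4 + α) * log r + ((4 + α) * log 4 - log (4 / 16 ^ k) - 1) := by
  have ht : 0 < r / 4 := by positivity
  have hdrop := hs.u_four_mul_le hkα hv ht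
  rw [show 4 * (r / 4) = r by ring] at hdrop
  set a := 4 / 16 ^ k * ((r / 4) ^ 4 * (r / 4) ^ α) with ha
  have ha0 : 0 < a := by positivity
  -- `y - a e^y ≤ -log a - 1`, from `e^z ≥ z + 1` at `z = y + log a`
  have hexp := add_one_le_exp (u (2 * (r / 4)) + log a)
  rw [exp_add, exp_log ha0] at hexp
  have hlog : log a = log (4 / 16 ^ k) + (4 + α) * (log r - log 4) := by
    rw [ha, log_mul (by positivity) (by positivity), log_mul (by positivity) (by positivity),
      log_pow, log_rpow ht, log_div hr.ne' (by norm_num)]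
    push_cast
    ring
  linarith

theorem eventually_deriv_u_nonneg (hs : RadialSystem k α u v) {r : ℝ} (hr : 0 < r)
    (hvr : 0 < v r) : ∀ᶠ x in atTop, 0 ≤ deriv u x := by
  have hgrow : ∀ x ≥ r, r ^ k * v r * (x - r) ≤ x ^ k * deriv u x - r ^ k * deriv u r :=
    fun x hx => mul_sub_le_sub_of_hasDerivAt hx
      (fun y hy => hs.hasDerivAt_flux_u y (hr.trans_le hy.1)) fun y hy =>
        mul_le_mul (pow_le_pow_left₀ hr.le hy.1 k) (hs.monotoneOn_v hr (hr.trans_le hy.1) hy.1)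
          hvr.le (pow_nonneg (hr.le.trans hy.1) k)
  have hlim : Tendsto (fun x => r ^ k * v r * (x - r) + r ^ k * deriv u r) atTop atTop :=
    tendsto_atTop_add_const_right _ _
      ((tendsto_atTop_add_const_right _ _ tendsto_id).const_mul_atTop (by positivity))
  filter_upwards [hlim.eventually_ge_atTop 0, eventually_ge_atTop r] with x hx hxr
  exact nonneg_of_mul_nonneg_right (by linarith [hgrow x hxr]) (pow_pos (hr.trans_le hxr) k)

theorem le_v_add_two_mul (hs : RadialSystem k α u v) (hkα : 0 ≤ k + α) {R h : ℝ} (hR : 0 < R)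
    (hh : 0 < h) (hhR : 2 * h ≤ R) (hv : ∀ x ≥ R, 0 ≤ v x) (hu : ∀ x ≥ R, 0 ≤ deriv u x) :
    R ^ k * R ^ α * exp (u R) * h / (2 * R) ^ k * h ≤ v (R + 2 * h) := by
  have hpos : ∀ x ≥ R, 0 < x := fun x hx => hR.trans_le hx
  have humono : MonotoneOn u (Ici R) :=
    monotoneOn_of_hasDerivAt_nonneg (fun x hx => hs.hasDerivAt_u x (hpos x hx)) hu
  have hw' : ∀ x ∈ Icc R (R + h), R ^ k * R ^ α * exp (u R) ≤ x ^ k * (x ^ α * exp (u x)) :=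
    fun x hx => by
      have := hpos x hx.1
      rw [← mul_assoc]
      exact mul_le_mul (pow_mul_rpow_le_pow_mul_rpow hkα hR hx.1)
        (exp_le_exp.2 (humono self_mem_Ici hx.1 hx.1)) (exp_pos _).le (by positivity)
  have hvA := le_sub_of_hasDerivAt_pow_mul (b := R + h) (c := R + 2 * h) (P := (2 * R) ^ k) hR
    (by linarith)
    (by linarith) (pow_le_pow_left₀ (by positivity) (by linarith) k)
    (fun x hx => hs.hasDerivAt_v x (hpos x (by linarith [hx.1])))
    (fun x hx => hs.hasDerivAt_flux_v x (hpos x hx.1)) hw'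
    (fun x hx => by have := hpos x (by linarith [hx.1]); positivity) (by positivity)
    (hs.deriv_v_nonneg hR)
  rw [show R + h - R = h by ring, show R + 2 * h - (R + h) = h by ring] at hvA
  linarith [hv (R + h) (by linarith)]

theorem u_add_mul_exp_le (hs : RadialSystem k α u v) (hkα : 0 ≤ k + α) {R η : ℝ} (hR : 0 < R)
    (hη0 : 0 < η) (hη1 : η ≤ 1) (hv : ∀ x ≥ R, 0 ≤ v x) (hu : ∀ x ≥ R, 0 ≤ deriv u x) :
    u R + 1 / (256 * 4 ^ k) * η ^ 4 * (R ^ 4 * R ^ α) * exp (u R) ≤ u (R * (1 + η)) := by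
  set h := η * R / 4 with hh
  have hh0 : 0 < h := by positivity
  have hhR : 4 * h ≤ R := by linarith [mul_le_mul_of_nonneg_right hη1 hR.le]
  have hpos : ∀ x ≥ R, 0 < x := fun x hx => hR.trans_le hx
  set A := R ^ k * R ^ α * exp (u R) * h / (2 * R) ^ k * h with hA
  have hA0 : 0 ≤ A := by positivity
  have hvA : A ≤ v (R + 2 * h) := hs.le_v_add_two_mul hkα hR hh0 (by linarith) hv hu
  have hm' : ∀ x ∈ Icc (R + 2 * h) (R + 3 * h), R ^ k * A ≤ x ^ k * v x := fun x hx => by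
    have hx0 := hpos x (by linarith [hx.1])
    have hvx := hs.monotoneOn_v (hpos _ (by linarith) : R + 2 * h ∈ Ioi 0) hx0 hx.1
    exact mul_le_mul (pow_le_pow_left₀ hR.le (by linarith [hx.1]) k) (hvA.trans hvx) hA0
      (pow_nonneg hx0.le k)
  have huB := le_sub_of_hasDerivAt_pow_mul (a := R + 2 * h) (b := R + 3 * h) (c := R + 4 * h)
    (P := (2 * R) ^ k) (by positivity) (by linarith) (by linarith)
    (pow_le_pow_left₀ (by positivity) (by linarith) k)
    (fun x hx => hs.hasDerivAt_u x (hpos x (by linarith [hx.1])))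
    (fun x hx => hs.hasDerivAt_flux_u x (hpos x (by linarith [hx.1]))) hm'
    (fun x hx => mul_nonneg (pow_nonneg (hpos x (by linarith [hx.1])).le k)
      (hv x (by linarith [hx.1]))) (by positivity) (hu _ (by linarith))
  rw [show R + 3 * h - (R + 2 * h) = h by ring, show R + 4 * h - (R + 3 * h) = h by ring] at huB
  have hu3 : u R ≤ u (R + 3 * h) :=
    monotoneOn_of_hasDerivAt_nonneg (D := Ici R) (fun x hx => hs.hasDerivAt_u x (hpos x hx)) hu
      self_mem_Ici
      (show R ≤ R + 3 * h by linarith) (by linarith)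
  have hgain : R ^ k * A * h / (2 * R) ^ k * h =
      1 / (256 * 4 ^ k) * η ^ 4 * (R ^ 4 * R ^ α) * exp (u R) := by
    rw [hA, hh, mul_pow, show (4 : ℝ) ^ k = 2 ^ k * 2 ^ k by rw [← mul_pow]; norm_num]
    field_simp
    ring
  rw [show R * (1 + η) = R + 4 * h by rw [hh]; ring]
  linarith

theorem v_nonpos (hs : RadialSystem k α u v) (hkα : 0 ≤ k + α) (hα : -4 ≤ α) {r : ℝ}
    (hr : 0 < r) : v r ≤ 0 := by
  by_contra! hvr
  obtain ⟨T, hT⟩ :=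
    eventually_atTop.1 ((hs.eventually_deriv_u_nonneg hr hvr).and (eventually_ge_atTop (max r 1)))
  have hT1 : 1 ≤ T := (le_max_right _ _).trans (hT T le_rfl).2
  have hrT : r ≤ T := (le_max_left _ _).trans (hT T le_rfl).2
  refine not_monotoneOn_Ici_of_forall_add_mul_exp_le (c := 1 / (256 * 4 ^ k)) (by linarith)
    (by positivity)
    (fun R hR η hη0 hη1 => ?_)
    (monotoneOn_of_hasDerivAt_nonneg (fun x hx => hs.hasDerivAt_u x (by linarith [mem_Ici.1 hx]))
      fun x hx => (hT x hx).1)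
  have hR1 : 1 ≤ R ^ 4 * R ^ α := by
    rw [← rpow_natCast, ← rpow_add (by linarith)]
    exact one_le_rpow (by linarith) (by push_cast; linarith)
  have := hs.u_add_mul_exp_le hkα (by linarith) hη0 hη1
    (fun x hx => hvr.le.trans (hs.monotoneOn_v hr (show 0 < x by linarith) (by linarith)))
    (fun x hx => (hT x (hR.trans hx)).1)
  have := mul_le_mul_of_nonneg_left hR1 (by positivity : 0 ≤ 1 / (256 * 4 ^ k) * η ^ 4 * exp (u R))
  linarith

end RadialSystem

/-- Uniform logarithmic upper bound (Lemma 3.3): for `N ≥ 3`, `α > -2`, there is a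
constant `C = C(N, α) > 0` such that every entire radial solution satisfies
`u(r) ≤ -(4+α) ln r + C` for all `r > 0`. -/
theorem uniform_log_upper_bound
    (N : ℕ) (hN : 3 ≤ N) (α : ℝ) (hα : -2 < α) :
    ∃ C > (0 : ℝ), ∀ u v : ℝ → ℝ, IsEntireRadialSolution N α u v →
      ∀ r : ℝ, 0 < r → u r ≤ -(4 + α) * Real.log r + C := by
  have hkα : 0 ≤ ((N - 1 : ℕ) : ℝ) + α := by
    have : (2 : ℝ) ≤ ((N - 1 : ℕ) : ℝ) := by exact_mod_cast (by omega : 2 ≤ N - 1)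
    linarith
  set C := (4 + α) * log 4 - log (4 / 16 ^ (N - 1)) - 1
  refine ⟨max 1 C, lt_max_of_lt_left one_pos, fun u v hsol r hr => ?_⟩
  have hs := hsol.radialSystem (by omega)
  have hv : ∀ x > 0, v x ≤ 0 := fun x hx => hs.v_nonpos hkα (by linarith) hx
  linarith [hs.le_neg_log_add hkα hv hr, le_max_right 1 C]
end
end
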